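/- arXiv:2210.01216 — 2 statements merged into one kernel-verified Lean document; each statement's English description precedes it below -/
import Mathlib

section
/- Let H ∈ (0,1/2). Then: (a) Δ²₁G_H(t) = 0 for all t ≤ −2; (b) |Δ²₁G_H(t)| ≤ K_H^{-1}(1/2 − H) t^{H−3/2} for all t > 0; and (c) Δ²₁G_H is bounded on ℝ, i.e. there is a finite constant C (depending only on H) with sup_{t∈ℝ} |Δ²₁G_H(t)| ≤ C. -/
open Real MeasureTheory Set

/-- The normalizing constant `K_H = Γ(H+1/2)/√(sin(πH)·Γ(2H+1))`. -/
noncomputable def KH (H : ℝ) : ℝ :=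
  Real.Gamma (H + 1/2) / Real.sqrt (Real.sin (Real.pi * H) * Real.Gamma (2*H + 1))

/-- `G_H(t) = K_H⁻¹ (H+1/2)⁻¹ t^{H+1/2}` for `t > 0`, and `0` for `t ≤ 0`. -/
noncomputable def GH (H : ℝ) (t : ℝ) : ℝ :=
  if 0 < t then (KH H)⁻¹ * (H + 1/2)⁻¹ * t ^ (H + 1/2) else 0

/-- Second-order forward difference with unit step. -/
noncomputable def Δ2 (f : ℝ → ℝ) (t : ℝ) : ℝ := f (t + 2) - 2 * f (t + 1) + f t

private lemma hasDerivAt_shift_rpow (q a : ℝ) {x : ℝ} (hx : 0 < x + a) :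
    HasDerivAt (fun y : ℝ => (y + a) ^ q) (q * (x + a) ^ (q - 1)) x := by
  have h := Real.hasDerivAt_rpow_const (x := x + a) (p := q) (Or.inl hx.ne')
  have h2 : HasDerivAt (fun y : ℝ => y + a) 1 x := (hasDerivAt_id x).add_const a
  simpa [Function.comp_def] using h.comp x h2

private lemma mvt_shift (q : ℝ) {a : ℝ} (ha : 0 < a) :
    ∃ c ∈ Set.Ioo a (a + 1), (a + 1) ^ q - a ^ q = q * c ^ (q - 1) := by
  obtain ⟨c, hc, hceq⟩ := exists_hasDerivAt_eq_slope (fun x : ℝ => x ^ q)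
    (fun x : ℝ => q * x ^ (q - 1)) (by linarith : a < a + 1)
    (fun x hx => (Real.continuousAt_rpow_const x q
      (Or.inl (ne_of_gt (lt_of_lt_of_le ha hx.1)))).continuousWithinAt)
    (fun x hx => Real.hasDerivAt_rpow_const (Or.inl (ne_of_gt (lt_trans ha hx.1))))
  refine ⟨c, hc, ?_⟩
  rw [hceq]
  field_simp
  ring

private lemma key_diff (p : ℝ) {t : ℝ} (ht : 0 < t) :
    ∃ d : ℝ, t < d ∧
      (t + 2) ^ p - 2 * (t + 1) ^ p + t ^ p = p * ((p - 1) * d ^ (p - 2)) := by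
  obtain ⟨c, hc, hceq⟩ := exists_hasDerivAt_eq_slope
    (fun x : ℝ => (x + 1) ^ p - x ^ p)
    (fun x : ℝ => p * (x + 1) ^ (p - 1) - p * x ^ (p - 1))
    (by linarith : t < t + 1)
    (fun x hx => by
      have hx0 : 0 < x := lt_of_lt_of_le ht hx.1
      exact (((continuousAt_id.add continuousAt_const).rpow_const
        (Or.inl (ne_of_gt (show (0:ℝ) < x + 1 by linarith)))).sub
        (continuousAt_id.rpow_const (Or.inl hx0.ne'))).continuousWithinAt)
    (fun x hx => by
      have hx0 : 0 < x := lt_trans ht hx.1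
      exact (hasDerivAt_shift_rpow p 1 (by linarith)).sub
        (Real.hasDerivAt_rpow_const (Or.inl hx0.ne')))
  have hc0 : 0 < c := lt_trans ht hc.1
  obtain ⟨d, hd, hdeq⟩ := mvt_shift (p - 1) hc0
  have e : p - 1 - 1 = p - 2 := by ring
  rw [e] at hdeq
  refine ⟨d, lt_trans hc.1 hd.1, ?_⟩
  have h1 : p * (c + 1) ^ (p - 1) - p * c ^ (p - 1)
      = (t + 2) ^ p - 2 * (t + 1) ^ p + t ^ p := by
    rw [hceq]
    have : t + 1 + 1 = t + 2 := by ring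
    rw [this]
    field_simp
    ring
  have h2 : p * (c + 1) ^ (p - 1) - p * c ^ (p - 1)
      = p * ((p - 1) * d ^ (p - 2)) := by
    rw [← mul_sub, hdeq]
  rw [← h1, h2]

theorem statement2 (H : ℝ) (hH : H ∈ Set.Ioo (0:ℝ) (1/2)) :
    (∀ t : ℝ, t ≤ -2 → Δ2 (GH H) t = 0) ∧
    (∀ t : ℝ, 0 < t → |Δ2 (GH H) t| ≤ (KH H)⁻¹ * (1/2 - H) * t ^ (H - 3/2)) ∧
    (∃ C : ℝ, ∀ t : ℝ, |Δ2 (GH H) t| ≤ C) := by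
  obtain ⟨hH0, hH1⟩ := hH
  set p : ℝ := H + 1/2 with hp
  have hp0 : 0 < p := by simp [hp]; linarith
  have hp1 : p < 1 := by simp [hp]; linarith
  have hKH : 0 ≤ (KH H)⁻¹ := by
    have : 0 ≤ KH H := div_nonneg (Real.Gamma_pos_of_pos (by linarith)).le (Real.sqrt_nonneg _)
    positivity
  have hGHzero : ∀ s : ℝ, s ≤ 0 → GH H s = 0 := fun s hs => if_neg (not_lt.2 hs)
  -- the pointwise bound (b), proven first
  have hb : ∀ t : ℝ, 0 < t → |Δ2 (GH H) t| ≤ (KH H)⁻¹ * (1/2 - H) * t ^ (H - 3/2) := by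
    intro t ht
    have h1 : (0:ℝ) < t + 1 := by linarith
    have h2 : (0:ℝ) < t + 2 := by linarith
    obtain ⟨d, hdt, hdeq⟩ := key_diff p ht
    have hd0 : 0 < d := lt_trans ht hdt
    have hΔ : Δ2 (GH H) t = (KH H)⁻¹ * p⁻¹ * (p * ((p - 1) * d ^ (p - 2))) := by
      rw [Δ2, GH, GH, GH, if_pos h2, if_pos h1, if_pos ht, ← hp, ← hdeq]
      ring
    rw [hΔ]
    have hval : (KH H)⁻¹ * p⁻¹ * (p * ((p - 1) * d ^ (p - 2)))
        = -((KH H)⁻¹ * ((1 - p) * d ^ (p - 2))) := by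
      calc (KH H)⁻¹ * p⁻¹ * (p * ((p - 1) * d ^ (p - 2)))
          = (KH H)⁻¹ * (p⁻¹ * p) * ((p - 1) * d ^ (p - 2)) := by ring
        _ = -((KH H)⁻¹ * ((1 - p) * d ^ (p - 2))) := by
            rw [inv_mul_cancel₀ hp0.ne']; ring
    have hnn : 0 ≤ (KH H)⁻¹ * ((1 - p) * d ^ (p - 2)) :=
      mul_nonneg hKH (mul_nonneg (by linarith) (Real.rpow_nonneg hd0.le _))
    rw [hval, abs_neg, abs_of_nonneg hnn]
    have hdle : d ^ (p - 2) ≤ t ^ (p - 2) :=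
      Real.rpow_le_rpow_of_nonpos ht hdt.le (by rw [hp]; linarith)
    have h1p : 1 - p = 1/2 - H := by rw [hp]; ring
    have hexp : p - 2 = H - 3/2 := by rw [hp]; ring
    rw [hexp] at hdle
    rw [h1p, hexp]
    calc (KH H)⁻¹ * ((1/2 - H) * d ^ (H - 3/2))
        ≤ (KH H)⁻¹ * ((1/2 - H) * t ^ (H - 3/2)) := by
          apply mul_le_mul_of_nonneg_left _ hKH
          exact mul_le_mul_of_nonneg_left hdle (by linarith)
      _ = (KH H)⁻¹ * (1/2 - H) * t ^ (H - 3/2) := by ring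
  refine ⟨?_, hb, ?_⟩
  · intro t ht
    rw [Δ2, hGHzero (t + 2) (by linarith), hGHzero (t + 1) (by linarith),
      hGHzero t (by linarith)]
    ring
  · -- boundedness
    set M : ℝ := (KH H)⁻¹ * p⁻¹ * (3:ℝ) ^ p with hM
    have hM0 : 0 ≤ M := by positivity
    have hGHbd : ∀ s : ℝ, s ≤ 3 → |GH H s| ≤ M := by
      intro s hs
      rw [GH]
      split_ifs with h
      · rw [abs_of_nonneg (by positivity)]
        apply mul_le_mul_of_nonneg_left _ (by positivity)
        exact Real.rpow_le_rpow h.le hs hp0.le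
      · simpa using hM0
    refine ⟨max (4 * M) ((KH H)⁻¹ * (1/2 - H)), fun t => ?_⟩
    rcases le_or_gt t 1 with ht | ht
    · refine le_trans ?_ (le_max_left _ _)
      have := hGHbd (t + 2) (by linarith)
      have := hGHbd (t + 1) (by linarith)
      have := hGHbd t (by linarith)
      rw [Δ2]
      calc |GH H (t+2) - 2 * GH H (t+1) + GH H t|
          ≤ |GH H (t+2) - 2 * GH H (t+1)| + |GH H t| := abs_add_le _ _
        _ ≤ |GH H (t+2)| + |2 * GH H (t+1)| + |GH H t| := by
            gcongr; exact abs_sub _ _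
        _ ≤ M + 2 * M + M := by
            rw [abs_mul, abs_two]; gcongr <;> assumption
        _ = 4 * M := by ring
    · refine le_trans (hb t (by linarith)) (le_trans ?_ (le_max_right _ _))
      have : t ^ (H - 3/2) ≤ 1 :=
        Real.rpow_le_one_of_one_le_of_nonpos ht.le (by linarith)
      calc (KH H)⁻¹ * (1/2 - H) * t ^ (H - 3/2)
          ≤ (KH H)⁻¹ * (1/2 - H) * 1 := by
            apply mul_le_mul_of_nonneg_left this
            apply mul_nonneg hKH (by linarith)
        _ = (KH H)⁻¹ * (1/2 - H) := by ring
end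

section
/- Let H ∈ (0,1/2). The function t ↦ Δ³₁G_H(t) vanishes on (−∞,−3], is bounded on ℝ, and is infinitely differentiable on (0,∞); moreover, for every integer j ≥ 0 there exists a finite constant C_j (depending only on H and j) such that |(d/dt)^j Δ³₁G_H(t)| ≤ C_j · t^{H−5/2−j} for all t > 0. -/
open Real MeasureTheory Set

/-- Third-order forward difference with unit step. -/
noncomputable def Δ3 (f : ℝ → ℝ) (t : ℝ) : ℝ :=
  f (t + 3) - 3 * f (t + 2) + 3 * f (t + 1) - f t

/- Auxiliary difference functions of `t ↦ t ^ q`. -/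
noncomputable def d1 (q t : ℝ) : ℝ := (t+1) ^ q - t ^ q
noncomputable def d2 (q t : ℝ) : ℝ := (t+2) ^ q - 2*(t+1) ^ q + t ^ q
noncomputable def d3 (q t : ℝ) : ℝ := (t+3) ^ q - 3*(t+2) ^ q + 3*(t+1) ^ q - t ^ q

lemma hasDerivAt_shift_rpow_s3 (q k t : ℝ) (hk : 0 ≤ k) (ht : 0 < t) :
    HasDerivAt (fun s : ℝ => (s + k) ^ q) (q * (t + k) ^ (q - 1)) t := by
  have h : HasDerivAt (fun s : ℝ => s + k) 1 t := (hasDerivAt_id t).add_const k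
  have := h.rpow_const (p := q) (Or.inl (by positivity))
  simpa using this

lemma hasDerivAt_d1 (q t : ℝ) (ht : 0 < t) :
    HasDerivAt (d1 q) (q * d1 (q-1) t) t := by
  have h1 := hasDerivAt_shift_rpow_s3 q 1 t (by norm_num) ht
  have h0 := hasDerivAt_shift_rpow_s3 q 0 t (le_refl 0) ht
  simp only [add_zero] at h0
  have := h1.sub h0
  refine this.congr_deriv ?_
  simp only [d1]
  ring

lemma hasDerivAt_d2 (q t : ℝ) (ht : 0 < t) :
    HasDerivAt (d2 q) (q * d2 (q-1) t) t := by
  have h2 := hasDerivAt_shift_rpow_s3 q 2 t (by norm_num) ht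
  have h1 := hasDerivAt_shift_rpow_s3 q 1 t (by norm_num) ht
  have h0 := hasDerivAt_shift_rpow_s3 q 0 t (le_refl 0) ht
  simp only [add_zero] at h0
  have := (h2.sub (h1.const_mul 2)).add h0
  refine this.congr_deriv ?_
  simp only [d2]
  ring

lemma hasDerivAt_d3 (q t : ℝ) (ht : 0 < t) :
    HasDerivAt (d3 q) (q * d3 (q-1) t) t := by
  have h3 := hasDerivAt_shift_rpow_s3 q 3 t (by norm_num) ht
  have h2 := hasDerivAt_shift_rpow_s3 q 2 t (by norm_num) ht
  have h1 := hasDerivAt_shift_rpow_s3 q 1 t (by norm_num) ht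
  have h0 := hasDerivAt_shift_rpow_s3 q 0 t (le_refl 0) ht
  simp only [add_zero] at h0
  have := ((h3.sub (h2.const_mul 3)).add (h1.const_mul 3)).sub h0
  refine this.congr_deriv ?_
  simp only [d3]
  ring

lemma bound_d1 (q t : ℝ) (hq : q ≤ 1) (ht : 0 < t) :
    |d1 q t| ≤ |q| * t ^ (q - 1) := by
  have key := (convex_Icc t (t+1)).norm_image_sub_le_of_norm_hasDerivWithin_le
    (f := fun x : ℝ => x ^ q) (f' := fun x => q * x ^ (q - 1)) (C := |q| * t ^ (q - 1))
    (fun x hx => (Real.hasDerivAt_rpow_const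
      (Or.inl (lt_of_lt_of_le ht hx.1).ne')).hasDerivWithinAt)
    (fun x hx => by
      have hx0 : 0 < x := lt_of_lt_of_le ht hx.1
      have h1 : ‖q * x ^ (q-1)‖ = |q| * x ^ (q-1) := by
        rw [Real.norm_eq_abs, abs_mul, abs_of_nonneg (Real.rpow_nonneg hx0.le _)]
      rw [h1]
      exact mul_le_mul_of_nonneg_left
        (Real.rpow_le_rpow_of_nonpos ht hx.1 (by linarith)) (abs_nonneg q))
    ⟨le_refl t, by linarith⟩ ⟨by linarith, le_refl (t+1)⟩
  have : ‖(t+1) ^ q - t ^ q‖ ≤ |q| * t ^ (q - 1) * ‖t + 1 - t‖ := key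
  simpa [d1, Real.norm_eq_abs] using this

lemma bound_d2 (q t : ℝ) (hq : q ≤ 1) (ht : 0 < t) :
    |d2 q t| ≤ |q| * |q-1| * t ^ (q - 2) := by
  have key := (convex_Icc t (t+1)).norm_image_sub_le_of_norm_hasDerivWithin_le
    (f := d1 q) (f' := fun x => q * d1 (q-1) x) (C := |q| * |q-1| * t ^ (q - 2))
    (fun x hx => (hasDerivAt_d1 q x (lt_of_lt_of_le ht hx.1)).hasDerivWithinAt)
    (fun x hx => by
      have hx0 : 0 < x := lt_of_lt_of_le ht hx.1
      have h1 := bound_d1 (q-1) x (by linarith) hx0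
      have h2 : x ^ (q - 1 - 1) ≤ t ^ (q - 2) := by
        have := Real.rpow_le_rpow_of_nonpos ht hx.1 (z := q - 2) (by linarith)
        simpa [show q - 1 - 1 = q - 2 by ring] using this
      calc ‖q * d1 (q-1) x‖ = |q| * |d1 (q-1) x| := by
            rw [Real.norm_eq_abs, abs_mul]
        _ ≤ |q| * (|q-1| * t ^ (q-2)) := by
            refine mul_le_mul_of_nonneg_left (h1.trans ?_) (abs_nonneg q)
            exact mul_le_mul_of_nonneg_left h2 (abs_nonneg _)
        _ = |q| * |q-1| * t ^ (q-2) := by ring)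
    ⟨le_refl t, by linarith⟩ ⟨by linarith, le_refl (t+1)⟩
  have h3 : d1 q (t+1) - d1 q t = d2 q t := by simp only [d1, d2]; ring_nf
  have : ‖d1 q (t+1) - d1 q t‖ ≤ |q| * |q-1| * t ^ (q - 2) * ‖t + 1 - t‖ := key
  rw [h3] at this
  simpa [Real.norm_eq_abs] using this

lemma bound_d3 (q t : ℝ) (hq : q ≤ 1) (ht : 0 < t) :
    |d3 q t| ≤ |q| * |q-1| * |q-2| * t ^ (q - 3) := by
  have key := (convex_Icc t (t+1)).norm_image_sub_le_of_norm_hasDerivWithin_le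
    (f := d2 q) (f' := fun x => q * d2 (q-1) x) (C := |q| * |q-1| * |q-2| * t ^ (q - 3))
    (fun x hx => (hasDerivAt_d2 q x (lt_of_lt_of_le ht hx.1)).hasDerivWithinAt)
    (fun x hx => by
      have hx0 : 0 < x := lt_of_lt_of_le ht hx.1
      have h1 := bound_d2 (q-1) x (by linarith) hx0
      have h2 : x ^ (q - 1 - 2) ≤ t ^ (q - 3) := by
        have := Real.rpow_le_rpow_of_nonpos ht hx.1 (z := q - 3) (by linarith)
        simpa [show q - 1 - 2 = q - 3 by ring] using this
      calc ‖q * d2 (q-1) x‖ = |q| * |d2 (q-1) x| := by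
            rw [Real.norm_eq_abs, abs_mul]
        _ ≤ |q| * (|q-1| * |q-1-1| * t ^ (q-3)) := by
            refine mul_le_mul_of_nonneg_left (h1.trans ?_) (abs_nonneg q)
            exact mul_le_mul_of_nonneg_left h2 (by positivity)
        _ = |q| * |q-1| * |q-2| * t ^ (q-3) := by
            rw [show q - 1 - 1 = q - 2 by ring]; ring)
    ⟨le_refl t, by linarith⟩ ⟨by linarith, le_refl (t+1)⟩
  have h3 : d2 q (t+1) - d2 q t = d3 q t := by simp only [d2, d3]; ring_nf
  have : ‖d2 q (t+1) - d2 q t‖ ≤ |q| * |q-1| * |q-2| * t ^ (q - 3) * ‖t + 1 - t‖ := key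
  rw [h3] at this
  simpa [Real.norm_eq_abs] using this

lemma contDiffOn_shift_rpow (q k : ℝ) (hk : 0 ≤ k) :
    ContDiffOn ℝ (⊤ : ℕ∞) (fun t : ℝ => (t + k) ^ q) (Set.Ioi (0:ℝ)) := by
  intro x hx
  have hx0 : (0:ℝ) < x := hx
  have h1 : ContDiffAt ℝ (⊤ : ℕ∞) (fun y : ℝ => y ^ q) (x + k) :=
    Real.contDiffAt_rpow_const_of_ne (by positivity)
  have h2 : ContDiffAt ℝ (⊤ : ℕ∞) (fun t : ℝ => t + k) x := by fun_prop
  exact (h1.comp x h2).contDiffWithinAt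

theorem statement3 (H : ℝ) (hH : H ∈ Set.Ioo (0:ℝ) (1/2)) :
    (∀ t : ℝ, t ≤ -3 → Δ3 (GH H) t = 0) ∧
    (∃ C : ℝ, ∀ t : ℝ, |Δ3 (GH H) t| ≤ C) ∧
    ContDiffOn ℝ (⊤ : ℕ∞) (Δ3 (GH H)) (Set.Ioi (0 : ℝ)) ∧
    (∀ j : ℕ, ∃ C : ℝ, ∀ t : ℝ, 0 < t →
      |iteratedDerivWithin j (Δ3 (GH H)) (Set.Ioi (0 : ℝ)) t| ≤ C * t ^ (H - 5/2 - j)) := by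
  obtain ⟨hH0, hH1⟩ := hH
  set c : ℝ := (KH H)⁻¹ * (H + 1/2)⁻¹ with hc
  set p : ℝ := H + 1/2 with hp
  have hp0 : 0 < p := by simp only [hp]; linarith
  have hp1 : p < 1 := by simp only [hp]; linarith
  -- the function coincides with `c * d3 p` on `Ioi 0`
  have hEq : ∀ t ∈ Set.Ioi (0:ℝ), Δ3 (GH H) t = c * d3 p t := by
    intro t ht
    have ht0 : (0:ℝ) < t := ht
    simp only [Δ3, GH, d3, ← hc, ← hp]
    rw [if_pos (by linarith : (0:ℝ) < t + 3), if_pos (by linarith : (0:ℝ) < t + 2),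
      if_pos (by linarith : (0:ℝ) < t + 1), if_pos ht0]
    ring
  -- key closed form for iterated derivatives
  have key : ∀ j : ℕ, ∀ t ∈ Set.Ioi (0:ℝ),
      iteratedDerivWithin j (Δ3 (GH H)) (Set.Ioi (0:ℝ)) t
        = (c * ∏ i ∈ Finset.range j, (p - i)) * d3 (p - j) t := by
    intro j
    induction j with
    | zero =>
      intro t ht
      simp [iteratedDerivWithin_zero, hEq t ht]
    | succ j ih =>
      intro t ht
      have ht0 : (0:ℝ) < t := ht
      rw [iteratedDerivWithin_succ]
      rw [derivWithin_congr ih (ih t ht)]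
      rw [derivWithin_of_isOpen isOpen_Ioi ht]
      have hd := (hasDerivAt_d3 (p - j) t ht0).const_mul (c * ∏ i ∈ Finset.range j, (p - i))
      rw [hd.deriv]
      rw [Finset.prod_range_succ]
      have h1 : (p - (j:ℝ)) - 1 = p - ((j:ℕ)+1 : ℕ) := by push_cast; ring
      rw [← h1]
      ring
  refine ⟨?_, ?_, ?_, ?_⟩
  · -- vanishing on (-∞, -3]
    intro t ht
    simp only [Δ3, GH]
    rw [if_neg (by linarith : ¬ (0:ℝ) < t + 3), if_neg (by linarith : ¬ (0:ℝ) < t + 2),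
      if_neg (by linarith : ¬ (0:ℝ) < t + 1), if_neg (by linarith : ¬ (0:ℝ) < t)]
    ring
  · -- boundedness
    refine ⟨32 * |c| + |c| * (|p| * |p-1| * |p-2|), fun t => ?_⟩
    have hM : 0 ≤ |p| * |p-1| * |p-2| := by positivity
    rcases le_or_gt 1 t with h1 | h1
    · have ht0 : (0:ℝ) < t := by linarith
      rw [hEq t ht0, abs_mul]
      have hb := bound_d3 p t hp1.le ht0
      have ht1 : t ^ (p - 3) ≤ 1 :=
        Real.rpow_le_one_of_one_le_of_nonpos h1 (by linarith)
      calc |c| * |d3 p t| ≤ |c| * (|p| * |p-1| * |p-2| * t ^ (p-3)) :=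
            mul_le_mul_of_nonneg_left hb (abs_nonneg c)
        _ ≤ |c| * (|p| * |p-1| * |p-2| * 1) := by
            refine mul_le_mul_of_nonneg_left ?_ (abs_nonneg c)
            exact mul_le_mul_of_nonneg_left ht1 hM
        _ ≤ 32 * |c| + |c| * (|p| * |p-1| * |p-2|) := by
            rw [mul_one]; exact le_add_of_nonneg_left (by positivity)
    · -- small t : direct bound on each term
      have hGH : ∀ s : ℝ, s ≤ 4 → |GH H s| ≤ |c| * 4 := by
        intro s hs
        simp only [GH, ← hc]
        split_ifs with h
        · rw [abs_mul, abs_of_nonneg (Real.rpow_nonneg h.le _)]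
          refine mul_le_mul_of_nonneg_left ?_ (abs_nonneg c)
          calc s ^ (H + 1/2) ≤ (4:ℝ) ^ (H + 1/2) :=
                Real.rpow_le_rpow h.le hs (by linarith)
            _ ≤ (4:ℝ) ^ (1:ℝ) :=
                Real.rpow_le_rpow_of_exponent_le (by norm_num) (by linarith)
            _ = 4 := Real.rpow_one 4
        · rw [abs_zero]; positivity
      have h3 := hGH (t+3) (by linarith)
      have h2 := hGH (t+2) (by linarith)
      have hh1 := hGH (t+1) (by linarith)
      have h0 := hGH t (by linarith)
      have : |Δ3 (GH H) t| ≤ |GH H (t+3)| + 3 * |GH H (t+2)| + 3 * |GH H (t+1)| + |GH H t| := by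
        simp only [Δ3]
        calc |GH H (t + 3) - 3 * GH H (t + 2) + 3 * GH H (t + 1) - GH H t|
            ≤ |GH H (t + 3) - 3 * GH H (t + 2) + 3 * GH H (t + 1)| + |GH H t| :=
              abs_sub _ _
          _ ≤ |GH H (t + 3) - 3 * GH H (t + 2)| + |3 * GH H (t + 1)| + |GH H t| := by
              gcongr
              exact abs_add_le _ _
          _ ≤ |GH H (t + 3)| + |3 * GH H (t + 2)| + |3 * GH H (t + 1)| + |GH H t| := by
              gcongr
              exact abs_sub _ _
          _ = |GH H (t+3)| + 3 * |GH H (t+2)| + 3 * |GH H (t+1)| + |GH H t| := by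
              rw [abs_mul, abs_mul]; norm_num
      calc |Δ3 (GH H) t| ≤ |GH H (t+3)| + 3 * |GH H (t+2)| + 3 * |GH H (t+1)| + |GH H t| := this
        _ ≤ |c| * 4 + 3 * (|c| * 4) + 3 * (|c| * 4) + |c| * 4 := by gcongr
        _ = 32 * |c| := by ring
        _ ≤ 32 * |c| + |c| * (|p| * |p-1| * |p-2|) := le_add_of_nonneg_right (by positivity)
  · -- smoothness
    have hsm : ContDiffOn ℝ (⊤ : ℕ∞) (fun t : ℝ => c * d3 p t) (Set.Ioi (0:ℝ)) := by
      have e3 := contDiffOn_shift_rpow p 3 (by norm_num)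
      have e2 := contDiffOn_shift_rpow p 2 (by norm_num)
      have e1 := contDiffOn_shift_rpow p 1 (by norm_num)
      have e0 := contDiffOn_shift_rpow p 0 (le_refl 0)
      simp only [add_zero] at e0
      have h : ContDiffOn ℝ (⊤ : ℕ∞)
          (fun t : ℝ => c * ((t+3) ^ p - 3*(t+2) ^ p + 3*(t+1) ^ p - t ^ p)) (Set.Ioi (0:ℝ)) :=
        contDiffOn_const.mul (((e3.sub (contDiffOn_const.mul e2)).add
          (contDiffOn_const.mul e1)).sub e0)
      exact h.congr (fun x _ => by simp only [d3])
    exact hsm.congr hEq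
  · -- derivative bounds
    intro j
    set a : ℝ := c * ∏ i ∈ Finset.range j, (p - i) with ha
    set q : ℝ := p - j with hq
    have hq1 : q ≤ 1 := by
      simp only [hq]
      have : (0:ℝ) ≤ j := Nat.cast_nonneg j
      linarith
    refine ⟨|a| * (|q| * |q-1| * |q-2|), fun t ht => ?_⟩
    rw [key j t ht, abs_mul]
    have hb := bound_d3 q t hq1 ht
    have hexp : q - 3 = H - 5/2 - j := by simp only [hq, hp]; ring
    rw [hexp] at hb
    calc |a| * |d3 q t| ≤ |a| * (|q| * |q-1| * |q-2| * t ^ (H - 5/2 - j)) :=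
          mul_le_mul_of_nonneg_left hb (abs_nonneg a)
      _ = |a| * (|q| * |q-1| * |q-2|) * t ^ (H - 5/2 - j) := by ring
end
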